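/- Let C be a uniform coloured Petri net, U its unfolding, S its skeleton and S' its modified skeleton. Relate a marking m_S of S and a marking m_{S'} of S' if m_S(p) = m_{S'}(p) + m_{S'}(p̄) for every pre-place p of a non-full minimal transition class (p̄ its complement place) and m_S(p) = m_{S'}(p) for all other places p. Then the composition of the abstraction relation from markings of U to markings of S (induced by the net morphism μ) with this relation is an abstraction relation between the markings of U and the markings of S': related markings satisfy exactly the same atomic propositions. -/

import Mathlib

/-
The unfolded proposition groups the places `[p,c]` by their underlying place
`p`, so its left-hand side is the proposition evaluated at the skeletal image
`σ(m)(p) = ∑_c m[p,c]`. The relation to `S'` splits `σ(m)(p)` as `m'(p) + m'(p̄)` exactly on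
the complemented places, which is how `APsatModS` counts the tokens of `S'`.
-/

set_option autoImplicit false

/-- A place/transition net: weight functions for arcs (weight 0 encodes "no arc")
and an initial marking. -/
structure PTNet (P T : Type) where
  pre : P → T → ℕ
  post : T → P → ℕ
  m0 : P → ℕ

/-- Transition `t` is enabled in marking `m`. -/
def PTNet.Enabled {P T : Type} (N : PTNet P T) (m : P → ℕ) (t : T) : Prop :=
  ∀ p, N.pre p t ≤ m p

/-- Firing `t` leads from marking `m` to marking `m'` (written `m →t m'`). -/
def PTNet.Fires {P T : Type} (N : PTNet P T) (m : P → ℕ) (t : T) (m' : P → ℕ) : Prop :=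
  N.Enabled m t ∧ ∀ p, m' p = m p - N.pre p t + N.post t p

/-- A (uniform) coloured Petri net: arc weights are finite sets of variables, each place
has a finite nonempty colour domain, each transition has a guard, and the initial marking
puts a multiset over `chi p` on each place `p`. -/
structure ColouredNet (P T Var Colour : Type) where
  Wpre : P → T → Finset Var
  Wpost : T → P → Finset Var
  chi : P → Finset Colour
  chi_nonempty : ∀ p, (chi p).Nonempty
  guard : T → (Var → Colour) → Prop
  m0 : P → Colour → ℕ
  m0_supp : ∀ p c, c ∉ chi p → m0 p c = 0

/-- A firing mode of transition `t`: an assignment of colours to variables that respects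
the colour domains of the adjacent places and satisfies the guard of `t`. -/
def IsMode {P T Var Colour : Type} (C : ColouredNet P T Var Colour) (t : T)
    (g : Var → Colour) : Prop :=
  (∀ p, ∀ x ∈ C.Wpre p t, g x ∈ C.chi p) ∧
  (∀ p, ∀ x ∈ C.Wpost t p, g x ∈ C.chi p) ∧ C.guard t g

/-- Places of the unfolding: pairs `[p,c]` with `c` in the colour domain of `p`. -/
abbrev UPlace {P T Var Colour : Type} (C : ColouredNet P T Var Colour) : Type :=
  {pc : P × Colour // pc.2 ∈ C.chi pc.1}

/-- Transitions of the unfolding: pairs `[t,g]` where `g` is a firing mode of `t`. -/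
abbrev UTrans {P T Var Colour : Type} (C : ColouredNet P T Var Colour) : Type :=
  {tg : T × (Var → Colour) // IsMode C tg.1 tg.2}

/-- The unfolding of a coloured net, as a P/T net. -/
def unfoldNet {P T Var Colour : Type} [DecidableEq Colour]
    (C : ColouredNet P T Var Colour) : PTNet (UPlace C) (UTrans C) where
  pre := fun pc tg =>
    ((C.Wpre pc.val.1 tg.val.1).filter (fun x => tg.val.2 x = pc.val.2)).card
  post := fun tg pc =>
    ((C.Wpost tg.val.1 pc.val.1).filter (fun x => tg.val.2 x = pc.val.2)).card
  m0 := fun pc => C.m0 pc.val.1 pc.val.2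

/-- The skeleton of a coloured net, as a P/T net. -/
def skelNet {P T Var Colour : Type} (C : ColouredNet P T Var Colour) : PTNet P T where
  pre := fun p t => (C.Wpre p t).card
  post := fun t p => (C.Wpost t p).card
  m0 := fun p => ∑ c ∈ C.chi p, C.m0 p c

/-- A marking of a coloured net: a multiset over `chi p` on each place `p`. -/
def IsCMarking {P T Var Colour : Type} (C : ColouredNet P T Var Colour)
    (m : P → Colour → ℕ) : Prop :=
  ∀ p c, c ∉ C.chi p → m p c = 0

/-- Transition `t` is enabled in coloured marking `m` under firing mode `g`. -/
def EnabledC {P T Var Colour : Type} [DecidableEq Colour] (C : ColouredNet P T Var Colour)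
    (m : P → Colour → ℕ) (t : T) (g : Var → Colour) : Prop :=
  IsMode C t g ∧ ∀ p c, ((C.Wpre p t).filter (fun x => g x = c)).card ≤ m p c

/-- A dead marking (deadlock) of a coloured net: no transition is enabled in any firing
mode. -/
def DeadC {P T Var Colour : Type} [DecidableEq Colour] (C : ColouredNet P T Var Colour)
    (m : P → Colour → ℕ) : Prop :=
  ∀ t g, ¬ EnabledC C m t g

/-- The skeletal image of a coloured marking. -/
def skelCMark {P T Var Colour : Type} (C : ColouredNet P T Var Colour)
    (m : P → Colour → ℕ) : P → ℕ :=
  fun p => ∑ c ∈ C.chi p, m p c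

/-- `C` has a deadlock-preserving skeleton: every dead marking of `C` has a dead skeletal
image. -/
def DeadlockPreserving {P T Var Colour : Type} [DecidableEq Colour]
    (C : ColouredNet P T Var Colour) : Prop :=
  ∀ m, IsCMarking C m → DeadC C m → ∀ t, ¬ (skelNet C).Enabled (skelCMark C m) t

/-- The transition class of `t` is minimal w.r.t. the componentwise order on input
vectors `f(t) = (card (Wpre p t))_p`. -/
def MinimalClass {P T Var Colour : Type} (C : ColouredNet P T Var Colour) (t : T) : Prop :=
  ∀ t', (∀ p, (C.Wpre p t').card ≤ (C.Wpre p t).card) →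
    ∀ p, (C.Wpre p t').card = (C.Wpre p t).card

/-- The transition class of `t` is full: every coloured marking matching the input size
requirements of the class enables some transition of the class in some firing mode. -/
def FullClass {P T Var Colour : Type} [DecidableEq Colour]
    (C : ColouredNet P T Var Colour) (t : T) : Prop :=
  ∀ m, IsCMarking C m → (∀ p, ∑ c ∈ C.chi p, m p c = (C.Wpre p t).card) →
    ∃ t' g, (∀ p, (C.Wpre p t').card = (C.Wpre p t).card) ∧ EnabledC C m t' g

/-- An atomic proposition `k₁p₁ + … + kₙpₙ ≤ k`, given by integer coefficients and a bound. -/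
structure AtomicProp (P : Type) where
  coeff : P → ℤ
  bound : ℤ

/-- Satisfaction of an atomic proposition by a marking of a P/T net. -/
def APsatPT {P : Type} [Fintype P] (a : AtomicProp P) (m : P → ℕ) : Prop :=
  ∑ p : P, a.coeff p * (m p : ℤ) ≤ a.bound

/-- Satisfaction, by a marking of the unfolding, of the unfolding of an atomic proposition
(each place `p` is substituted by the sum of the places `[p,c]` for `c ∈ chi p`). -/
def APsatU {P T Var Colour : Type} [Fintype P] [Fintype Colour] [DecidableEq Colour]
    (C : ColouredNet P T Var Colour) (a : AtomicProp P) (m : UPlace C → ℕ) : Prop :=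
  ∑ u : UPlace C, a.coeff u.val.1 * (m u : ℤ) ≤ a.bound

/-- Extension of the net morphism from the unfolding to the skeleton to markings:
`σ(m)(p) = ∑_{c ∈ chi p} m [p,c]`. -/
def skel {P T Var Colour : Type} (C : ColouredNet P T Var Colour)
    (m : UPlace C → ℕ) : P → ℕ :=
  fun p => ∑ c ∈ (C.chi p).attach, m ⟨(p, c.val), c.property⟩

/-- `p` is a pre-place of some non-full minimal transition class. -/
def PreNonFull {P T Var Colour : Type} [DecidableEq Colour]
    (C : ColouredNet P T Var Colour) (p : P) : Prop :=
  ∃ t, MinimalClass C t ∧ ¬ FullClass C t ∧ 0 < (C.Wpre p t).card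

/-- Complement places of the modified skeleton. -/
abbrev CPlace {P T Var Colour : Type} [DecidableEq Colour]
    (C : ColouredNet P T Var Colour) : Type :=
  {p : P // PreNonFull C p}

/-- The modified skeleton `S'`: the skeleton plus, for every pre-place `p` of a non-full
minimal transition class, a complement place `p̄` and a recipient transition moving
single tokens from `p` to `p̄` (both arc weights 1). -/
def modSkelNet {P T Var Colour : Type} [DecidableEq P] [DecidableEq Colour]
    (C : ColouredNet P T Var Colour) : PTNet (P ⊕ CPlace C) (T ⊕ CPlace C) where
  pre := fun x u =>
    match x, u with
    | Sum.inl p, Sum.inl t => (C.Wpre p t).card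
    | Sum.inl p, Sum.inr q => if p = q.val then 1 else 0
    | Sum.inr _, _ => 0
  post := fun u x =>
    match u, x with
    | Sum.inl t, Sum.inl p => (C.Wpost t p).card
    | Sum.inl _, Sum.inr _ => 0
    | Sum.inr _, Sum.inl _ => 0
    | Sum.inr q, Sum.inr q' => if q.val = q'.val then 1 else 0
  m0 := fun x =>
    match x with
    | Sum.inl p => ∑ c ∈ C.chi p, C.m0 p c
    | Sum.inr _ => 0

/-- The relation between markings of the unfolding `U` and markings of the modified
skeleton `S'`: the composition of the abstraction `skel` from `U` to `S` with the
relation `m_S(p) = m_{S'}(p) + m_{S'}(p̄)` for complemented places `p` and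
`m_S(p) = m_{S'}(p)` for all other places. -/
def RelUS {P T Var Colour : Type} [DecidableEq P] [DecidableEq Colour]
    (C : ColouredNet P T Var Colour)
    (mU : UPlace C → ℕ) (m' : (P ⊕ CPlace C) → ℕ) : Prop :=
  (∀ p, ∀ h : PreNonFull C p,
      skel C mU p = m' (Sum.inl p) + m' (Sum.inr ⟨p, h⟩)) ∧
  (∀ p, ¬ PreNonFull C p → skel C mU p = m' (Sum.inl p))

open Classical in
/-- Satisfaction of an atomic proposition (over the original places, not the complement
places) by a marking of the modified skeleton: the tokens on a complemented place `p` are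
counted together with those on its complement place `p̄` (their sum is invariant under
the recipient transitions). -/
def APsatModS {P T Var Colour : Type} [Fintype P] [DecidableEq P] [DecidableEq Colour]
    (C : ColouredNet P T Var Colour) (a : AtomicProp P)
    (m' : (P ⊕ CPlace C) → ℕ) : Prop :=
  ∑ p : P, a.coeff p * ((m' (Sum.inl p) : ℤ) +
      (if h : PreNonFull C p then (m' (Sum.inr ⟨p, h⟩) : ℤ) else 0)) ≤ a.bound

theorem apsatU_iff_apsatPT_skel {P T Var Colour : Type} [Fintype P] [Fintype Colour]
    [DecidableEq Colour] (C : ColouredNet P T Var Colour) (a : AtomicProp P)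
    (m : UPlace C → ℕ) : APsatU C a m ↔ APsatPT a (skel C m) := by
  suffices ∑ u : UPlace C, a.coeff u.val.1 * (m u : ℤ)
      = ∑ p : P, a.coeff p * (skel C m p : ℤ) by
    rw [APsatU, APsatPT, this]
  rw [← (Equiv.subtypeProdEquivSigmaSubtype fun p c => c ∈ C.chi p).symm.sum_comp,
    ← Finset.univ_sigma_univ, Finset.sum_sigma]
  refine Finset.sum_congr rfl fun p _ => ?_
  simp only [skel, Nat.cast_sum, Finset.mul_sum, Finset.univ_eq_attach]
  rfl

namespace RelUS

variable {P T Var Colour : Type} [DecidableEq P] [DecidableEq Colour]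
  {C : ColouredNet P T Var Colour} {mU : UPlace C → ℕ} {m' : (P ⊕ CPlace C) → ℕ}

open Classical in
theorem skel_eq (h : RelUS C mU m') (p : P) :
    (skel C mU p : ℤ) = m' (Sum.inl p) +
      (if hp : PreNonFull C p then (m' (Sum.inr ⟨p, hp⟩) : ℤ) else 0) := by
  by_cases hp : PreNonFull C p
  · rw [dif_pos hp, h.1 p hp, Nat.cast_add]
  · rw [dif_neg hp, h.2 p hp, add_zero]

theorem apsatModS_iff [Fintype P] (h : RelUS C mU m') (a : AtomicProp P) :
    APsatModS C a m' ↔ APsatPT a (skel C mU) := by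
  simp only [APsatModS, APsatPT, h.skel_eq]

end RelUS

theorem relUS_abstraction_general
    {P T Var Colour : Type} [Fintype P] [Fintype Colour]
    [DecidableEq P] [DecidableEq Colour]
    (C : ColouredNet P T Var Colour)
    (mU : UPlace C → ℕ) (m' : (P ⊕ CPlace C) → ℕ) (h : RelUS C mU m')
    (a : AtomicProp P) :
    APsatU C a mU ↔ APsatModS C a m' :=
  (apsatU_iff_apsatPT_skel C a mU).trans (h.apsatModS_iff a).symm

/-- The composition of the abstraction from markings of the unfolding to
markings of the skeleton with the relation between markings of the skeleton and of the
modified skeleton is an abstraction relation between the markings of `U` and of `S'`: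
related markings satisfy exactly the same atomic propositions. -/
theorem relUS_abstraction
    {P T Var Colour : Type} [Fintype P] [Fintype T] [Fintype Var] [Fintype Colour]
    [DecidableEq P] [DecidableEq Colour]
    (C : ColouredNet P T Var Colour)
    (mU : UPlace C → ℕ) (m' : (P ⊕ CPlace C) → ℕ) (h : RelUS C mU m')
    (a : AtomicProp P) :
    APsatU C a mU ↔ APsatModS C a m' :=
  relUS_abstraction_general C mU m' h a
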